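/- arXiv:1601.01581 — 5 statements merged into one kernel-verified Lean document; each statement's English description precedes it below -/
import Mathlib

section
/- With G^{(α,β)}_{(1)}(x₁,…,x_n) ∈ K defined by the bialternant formula for the one-box partition λ = (1), one has 1 + (α+β)·G^{(α,β)}_{(1)}(x₁,…,x_n) = ∏_{i=1}^n (1+βx_i)/(1−αx_i). -/
/-- The canonical stable Grothendieck polynomial `G^{(α,β)}_λ(y₁,…,yₙ)`, defined by the
bialternant formula
`G^{(α,β)}_λ = det[ yᵢ^{λⱼ+n-j} (1+βyᵢ)^{j-1} (1-αyᵢ)^{-λⱼ} ] / ∏_{i<j} (yᵢ - yⱼ)`.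
Here `lam j` is the part `λ_{j+1}` (0-indexed `j`). -/
noncomputable def Gb {K : Type*} [Field K] (n : ℕ) (α β : K) (lam : Fin n → ℕ)
    (y : Fin n → K) : K :=
  (Matrix.of fun i j : Fin n =>
      y i ^ (lam j + (n - 1 - (j : ℕ))) * (1 + β * y i) ^ (j : ℕ) *
        ((1 - α * y i) ^ lam j)⁻¹).det /
    ∏ i : Fin n, ∏ j ∈ Finset.Ioi i, (y i - y j)

/-!
Put `u = 1 + βx` and `t = 1 - αx`, so that `u = t + (α+β)x`. The homogeneous Vandermonde matrix
`P` with rows `(u_i^j x_i^{n-1-j})_j` has determinant `V = ∏_{i<j} (x_i - x_j)`. Multiplying row `i`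
of the bialternant matrix `M` of `λ = (1)` by `t_i` gives the matrix with rows `t_i P_i`, except
that the first column is `x^n` rather than `t x^{n-1}`. As `u x^{n-1} = (α+β) x^n + t x^{n-1}`,
linearity in the first column expresses the determinant of the matrix with first column
`u x^{n-1}` as `(α+β) ∏ t · det M + ∏ t · V`; on the other hand that matrix arises from `diag(u) P`
by the column operations `C_{j+1} ↦ C_{j+1} - (α+β) C_j`, so its determinant is `∏ u · V`.
-/

open Finset Matrix

section

variable {R : Type*} [CommRing R] {m : ℕ}

theorem det_projVandermonde_one_add_mul (b : R) (x : Fin m → R) :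
    (projVandermonde (fun i => 1 + b * x i) x).det = ∏ i : Fin m, ∏ j ∈ Ioi i, (x i - x j) := by
  rw [det_projVandermonde]
  refine prod_congr rfl fun i _ => prod_congr rfl fun j _ => ?_
  ring

variable (u t x : Fin (m + 1) → R) (c : R)

theorem det_updateCol_zero_mul_projVandermonde (h : ∀ i, u i = t i + c * x i) :
    ((of fun i j => t i * projVandermonde u x i j).updateCol 0 fun i => u i * x i ^ m).det =
      (∏ i, u i) * (projVandermonde u x).det := by
  rw [← det_mul_column]
  refine (det_eq_of_forall_col_eq_smul_add_pred (fun _ => c) (fun i => ?_) fun i j => ?_).symm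
  · simp [projVandermonde_apply]
  · simp only [of_apply, projVandermonde_apply, updateCol_ne (Fin.succ_ne_zero j), Fin.val_succ,
      Fin.val_castSucc, Fin.val_rev]
    rw [show m + 1 - (j + 1 + 1) = m - 1 - j by omega, show m + 1 - (j + 1) = m - 1 - j + 1 by omega,
      h i]
    ring

theorem prod_mul_det_projVandermonde_eq (h : ∀ i, u i = t i + c * x i) :
    (∏ i, u i) * (projVandermonde u x).det =
      c * ((of fun i j => t i * projVandermonde u x i j).updateCol 0 fun i => x i ^ (m + 1)).det +
        (∏ i, t i) * (projVandermonde u x).det := by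
  have hcol : (fun i => u i * x i ^ m) = c • (fun i => x i ^ (m + 1)) + fun i => t i * x i ^ m := by
    ext i
    simp only [Pi.add_apply, Pi.smul_apply, smul_eq_mul, h i]
    ring
  rw [← det_updateCol_zero_mul_projVandermonde u t x c h, hcol, det_updateCol_add,
    det_updateCol_smul, ← det_mul_column t]
  congr 2
  convert updateCol_eq_self _ (0 : Fin (m + 1)) using 2
  ext i
  simp [projVandermonde_apply]

end

/-- with `G^{(α,β)}_{(1)}(x₁,…,xₙ)` defined by the bialternant formula for the
one-box partition `λ = (1)`, one has
`1 + (α+β)·G^{(α,β)}_{(1)}(x₁,…,xₙ) = ∏_{i=1}^n (1+βxᵢ)/(1-αxᵢ)`.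
(Stated over an arbitrary field with the nondegeneracy conditions that hold automatically in
the field of rational functions `ℚ(α, β, x₁, …, xₙ)`.) -/
theorem stmt0 {K : Type*} [Field K] (n : ℕ) (hn : 0 < n) (α β : K) (x : Fin n → K)
    (hx : Function.Injective x) (hα : ∀ i, 1 - α * x i ≠ 0) :
    1 + (α + β) * Gb n α β (fun j => if (j : ℕ) = 0 then 1 else 0) x =
      ∏ i : Fin n, (1 + β * x i) / (1 - α * x i) := by
  obtain ⟨m, rfl⟩ : ∃ m, n = m + 1 := ⟨n - 1, by omega⟩
  set u : Fin (m + 1) → K := fun i => 1 + β * x i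
  set t : Fin (m + 1) → K := fun i => 1 - α * x i
  set M := of fun i j : Fin (m + 1) =>
    x i ^ ((if (j : ℕ) = 0 then 1 else 0) + (m + 1 - 1 - (j : ℕ))) * (1 + β * x i) ^ (j : ℕ) *
      ((1 - α * x i) ^ (if (j : ℕ) = 0 then 1 else 0))⁻¹
  have hV0 : ∏ i : Fin (m + 1), ∏ j ∈ Ioi i, (x i - x j) ≠ 0 :=
    prod_ne_zero_iff.2 fun i _ => prod_ne_zero_iff.2 fun j hj =>
      sub_ne_zero.2 <| hx.ne (mem_Ioi.1 hj).ne
  have hM : (of fun i j => t i * projVandermonde u x i j).updateCol 0 (fun i => x i ^ (m + 1)) =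
      of fun i j => t i * M i j := by
    ext i j
    rcases eq_or_ne j 0 with rfl | hj
    · simp only [M, t, updateCol_self, of_apply, Fin.val_zero, if_true, Nat.add_sub_cancel,
        Nat.sub_zero, pow_zero, pow_one, mul_one, add_comm 1 m]
      field_simp [hα i]
    · simp [M, u, hj, projVandermonde_apply, Fin.val_rev, mul_comm]
  have hdet := prod_mul_det_projVandermonde_eq u t x (α + β) fun i => by ring
  rw [hM, det_mul_column, det_projVandermonde_one_add_mul] at hdet
  have hG : Gb (m + 1) α β (fun j => if (j : ℕ) = 0 then 1 else 0) x =
      M.det / ∏ i : Fin (m + 1), ∏ j ∈ Ioi i, (x i - x j) := rfl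
  rw [hG, prod_div_distrib]
  field_simp [prod_ne_zero_iff.2 fun i _ => hα i]
  linear_combination -hdet
end

section
/- For every partition λ with at most n nonzero parts, G^{(α,β)}_λ(x₁,…,x_n) = G^{(0,α+β)}_λ(x₁/(1−αx₁), …, x_n/(1−αx_n)); that is, the bialternant expression with parameters (0, α+β) evaluated at the pairwise distinct rational functions x_i/(1−αx_i) equals G^{(α,β)}_λ(x₁,…,x_n). -/
open Finset

lemma Fin.prod_prod_Ioi_mul {M : Type*} [CommMonoid M] {n : ℕ} (f : Fin n → M) :
    ∏ i, ∏ j ∈ Ioi i, (f i * f j) = ∏ i, f i ^ (n - 1) := by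
  have hleft : ∏ i, ∏ _j ∈ Ioi i, f i = ∏ i, f i ^ (n - 1 - i) := by
    simp only [Finset.prod_const, Fin.card_Ioi]
  have hright : ∏ i, ∏ j ∈ Ioi i, f j = ∏ j, f j ^ (j : ℕ) := by
    rw [prod_comm' (t' := univ) (s' := Iio) (by simp)]
    simp only [Finset.prod_const, Fin.card_Iio]
  simp_rw [prod_mul_distrib, hleft, hright, ← prod_mul_distrib, ← pow_add]
  refine prod_congr rfl fun i _ => congrArg _ ?_
  omega

section Moebius

variable {K : Type*} [Field K] {α x : K}

lemma div_one_sub_mul_sub_div {y : K} (hx : 1 - α * x ≠ 0) (hy : 1 - α * y ≠ 0) :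
    x / (1 - α * x) - y / (1 - α * y) = ((1 - α * x) * (1 - α * y))⁻¹ * (x - y) := by
  rw [div_sub_div _ _ hx hy, inv_mul_eq_div]
  ring

lemma one_add_mul_div_one_sub_mul (β : K) (hx : 1 - α * x ≠ 0) :
    1 + (α + β) * (x / (1 - α * x)) = (1 + β * x) / (1 - α * x) := by
  field_simp
  ring

lemma div_one_sub_mul_pow_mul_one_add_mul_pow (β : K) (hx : 1 - α * x ≠ 0) {a j l m : ℕ}
    (h : a + j = m + l) :
    (x / (1 - α * x)) ^ a * (1 + (α + β) * (x / (1 - α * x))) ^ j =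
      ((1 - α * x) ^ m)⁻¹ * (x ^ a * (1 + β * x) ^ j * ((1 - α * x) ^ l)⁻¹) := by
  rw [one_add_mul_div_one_sub_mul β hx, div_pow, div_pow, div_mul_div_comm, ← pow_add, h,
    pow_add]
  field_simp

lemma prod_prod_Ioi_div_one_sub_mul_sub {n : ℕ} (x : Fin n → K) (hα : ∀ i, 1 - α * x i ≠ 0) :
    ∏ i, ∏ j ∈ Ioi i, (x i / (1 - α * x i) - x j / (1 - α * x j)) =
      (∏ i, ((1 - α * x i) ^ (n - 1))⁻¹) * ∏ i, ∏ j ∈ Ioi i, (x i - x j) := by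
  simp_rw [div_one_sub_mul_sub_div (hα _) (hα _), prod_mul_distrib, mul_inv,
    Fin.prod_prod_Ioi_mul, inv_pow]

end Moebius

theorem stmt1_general {K : Type*} [Field K] (n : ℕ) (α β : K) (x : Fin n → K)
    (hα : ∀ i, 1 - α * x i ≠ 0)
    (lam : Fin n → ℕ) :
    Gb n α β lam x = Gb n 0 (α + β) lam (fun i => x i / (1 - α * x i)) := by
  set A : Matrix (Fin n) (Fin n) K := Matrix.of fun i j =>
    x i ^ (lam j + (n - 1 - (j : ℕ))) * (1 + β * x i) ^ (j : ℕ) * ((1 - α * x i) ^ lam j)⁻¹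
  have hrows : (Matrix.of fun i j : Fin n =>
      (x i / (1 - α * x i)) ^ (lam j + (n - 1 - (j : ℕ))) *
        (1 + (α + β) * (x i / (1 - α * x i))) ^ (j : ℕ) *
        ((1 - 0 * (x i / (1 - α * x i))) ^ lam j)⁻¹) =
      Matrix.of fun i j => ((1 - α * x i) ^ (n - 1))⁻¹ * A i j := by
    ext i j
    simp only [Matrix.of_apply, zero_mul, sub_zero, one_pow, inv_one, mul_one, A]
    exact div_one_sub_mul_pow_mul_one_add_mul_pow β (hα i) (by omega)
  have hscale : ∏ i, ((1 - α * x i) ^ (n - 1))⁻¹ ≠ 0 :=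
    prod_ne_zero_iff.mpr fun i _ => inv_ne_zero (pow_ne_zero _ (hα i))
  rw [Gb, Gb, hrows, Matrix.det_mul_column, prod_prod_Ioi_div_one_sub_mul_sub x hα,
    mul_div_mul_left _ _ hscale]

/-- for every partition `λ` with at most `n` nonzero parts,
`G^{(α,β)}_λ(x₁,…,xₙ) = G^{(0,α+β)}_λ(x₁/(1-αx₁), …, xₙ/(1-αxₙ))`.
(Stated over an arbitrary field with the nondegeneracy conditions that hold automatically in
`ℚ(α, β, x₁, …, xₙ)`; there the points `xᵢ/(1-αxᵢ)` are automatically pairwise distinct.) -/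
theorem stmt1 {K : Type*} [Field K] (n : ℕ) (hn : 0 < n) (α β : K) (x : Fin n → K)
    (hx : Function.Injective x) (hα : ∀ i, 1 - α * x i ≠ 0)
    (lam : Fin n → ℕ) (hlam : Antitone lam) :
    Gb n α β lam x = Gb n 0 (α + β) lam (fun i => x i / (1 - α * x i)) :=
  stmt1_general n α β x hα lam
end

section
/- Stability: for every partition λ with at most n nonzero parts, the (n+1)-variable canonical stable Grothendieck polynomial evaluated with last variable equal to 0 equals the n-variable one: G^{(α,β)}_λ(x₁,…,x_n,0) = G^{(α,β)}_λ(x₁,…,x_n). Here G^{(α,β)}_λ(x₁,…,x_n,0) means the (n+1)×(n+1) bialternant determinant det[ y_i^{λ_j+n+1−j} (1+βy_i)^{j−1} (1−αy_i)^{−λ_j} ]_{1≤i,j≤n+1} with y_i = x_i for i ≤ n and y_{n+1} = 0, divided by ∏_{1≤i<j≤n}(x_i−x_j)·∏_{i=1}^n x_i. -/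
namespace Matrix

theorem det_eq_mul_det_submatrix_castSucc_of_last_row {R : Type*} [CommRing R] {n : ℕ}
    (M : Matrix (Fin (n + 1)) (Fin (n + 1)) R)
    (h : ∀ j, j ≠ Fin.last n → M (Fin.last n) j = 0) :
    M.det = M (Fin.last n) (Fin.last n) * (M.submatrix Fin.castSucc Fin.castSucc).det := by
  rw [det_succ_row M (Fin.last n), Fintype.sum_eq_single (Fin.last n)
    fun j hj => by rw [h j hj, mul_zero, zero_mul]]
  simp [← two_mul, pow_mul]

end Matrix

section Bialternant

variable {K : Type*} [Field K]

def bialternantMatrix (n : ℕ) (α β : K) (lam : Fin n → ℕ) (y : Fin n → K) :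
    Matrix (Fin n) (Fin n) K :=
  Matrix.of fun i j => y i ^ (lam j + (n - 1 - (j : ℕ))) * (1 + β * y i) ^ (j : ℕ) *
    ((1 - α * y i) ^ lam j)⁻¹

theorem Gb_eq_det_bialternantMatrix_div (n : ℕ) (α β : K) (lam : Fin n → ℕ) (y : Fin n → K) :
    Gb n α β lam y =
      (bialternantMatrix n α β lam y).det / ∏ i : Fin n, ∏ j ∈ Finset.Ioi i, (y i - y j) :=
  rfl

variable {n : ℕ} (α β : K) (x : Fin n → K) (lam : Fin n → ℕ)

theorem bialternantMatrix_snoc_zero_last_row_of_ne (j : Fin (n + 1)) (hj : j ≠ Fin.last n) :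
    bialternantMatrix (n + 1) α β (Fin.snoc lam 0) (Fin.snoc x 0) (Fin.last n) j = 0 := by
  have hexp : (Fin.snoc lam 0 : Fin (n + 1) → ℕ) j + (n + 1 - 1 - (j : ℕ)) ≠ 0 := by
    have := Fin.val_lt_last hj
    omega
  simp only [bialternantMatrix, Matrix.of_apply, Fin.snoc_last, mul_zero, zero_pow hexp, zero_mul]

theorem bialternantMatrix_snoc_zero_last_last :
    bialternantMatrix (n + 1) α β (Fin.snoc lam 0) (Fin.snoc x 0) (Fin.last n) (Fin.last n)
      = 1 := by
  simp [bialternantMatrix]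

theorem submatrix_castSucc_bialternantMatrix_snoc_zero :
    (bialternantMatrix (n + 1) α β (Fin.snoc lam 0) (Fin.snoc x 0)).submatrix
        Fin.castSucc Fin.castSucc =
      Matrix.of fun i j => x i * bialternantMatrix n α β lam x i j := by
  ext i j
  have hexp : lam j + (n + 1 - 1 - (j : ℕ)) = lam j + (n - 1 - (j : ℕ)) + 1 := by omega
  simp only [bialternantMatrix, Matrix.submatrix_apply, Matrix.of_apply, Fin.snoc_castSucc,
    Fin.val_castSucc, hexp, pow_succ]
  ring

theorem det_bialternantMatrix_snoc_zero :
    (bialternantMatrix (n + 1) α β (Fin.snoc lam 0) (Fin.snoc x 0)).det =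
      (∏ i, x i) * (bialternantMatrix n α β lam x).det := by
  rw [Matrix.det_eq_mul_det_submatrix_castSucc_of_last_row _
      (bialternantMatrix_snoc_zero_last_row_of_ne α β x lam),
    bialternantMatrix_snoc_zero_last_last, submatrix_castSucc_bialternantMatrix_snoc_zero,
    Matrix.det_mul_column, one_mul]

end Bialternant

theorem stmt3_general {K : Type*} [Field K] (n : ℕ) (α β : K) (x : Fin n → K)
    (hx0 : ∀ i, x i ≠ 0)
    (lam : Fin n → ℕ) :
    (Matrix.of fun i j : Fin (n + 1) =>
        (Fin.snoc x (0 : K) : Fin (n + 1) → K) i ^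
            ((Fin.snoc lam 0 : Fin (n + 1) → ℕ) j + (n - (j : ℕ))) *
          (1 + β * (Fin.snoc x (0 : K) : Fin (n + 1) → K) i) ^ (j : ℕ) *
          ((1 - α * (Fin.snoc x (0 : K) : Fin (n + 1) → K) i) ^
            (Fin.snoc lam 0 : Fin (n + 1) → ℕ) j)⁻¹).det /
      ((∏ i : Fin n, ∏ j ∈ Finset.Ioi i, (x i - x j)) * ∏ i : Fin n, x i) =
    Gb n α β lam x := by
  change (bialternantMatrix (n + 1) α β (Fin.snoc lam 0) (Fin.snoc x 0)).det / _ = _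
  rw [det_bialternantMatrix_snoc_zero, Gb_eq_det_bialternantMatrix_div,
    mul_comm (∏ i, ∏ j ∈ Finset.Ioi i, _), mul_div_mul_left _ _ (Finset.prod_ne_zero_iff.mpr fun i _ => hx0 i)]

/-- stability: for every partition `λ` with at most `n` nonzero parts,
`G^{(α,β)}_λ(x₁,…,xₙ,0) = G^{(α,β)}_λ(x₁,…,xₙ)`, where the left-hand side is the
`(n+1)×(n+1)` bialternant determinant with `y_i = x_i` for `i ≤ n`, `y_{n+1} = 0`
(and `λ_{n+1} = 0`), divided by `∏_{1≤i<j≤n}(xᵢ-xⱼ)·∏_{i=1}^n xᵢ`. -/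
theorem stmt3 {K : Type*} [Field K] (n : ℕ) (hn : 0 < n) (α β : K) (x : Fin n → K)
    (hx : Function.Injective x) (hx0 : ∀ i, x i ≠ 0) (hα : ∀ i, 1 - α * x i ≠ 0)
    (lam : Fin n → ℕ) (hlam : Antitone lam) :
    (Matrix.of fun i j : Fin (n + 1) =>
        (Fin.snoc x (0 : K) : Fin (n + 1) → K) i ^
            ((Fin.snoc lam 0 : Fin (n + 1) → ℕ) j + (n - (j : ℕ))) *
          (1 + β * (Fin.snoc x (0 : K) : Fin (n + 1) → K) i) ^ (j : ℕ) *
          ((1 - α * (Fin.snoc x (0 : K) : Fin (n + 1) → K) i) ^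
            (Fin.snoc lam 0 : Fin (n + 1) → ℕ) j)⁻¹).det /
      ((∏ i : Fin n, ∏ j ∈ Finset.Ioi i, (x i - x j)) * ∏ i : Fin n, x i) =
    Gb n α β lam x :=
  stmt3_general n α β x hx0 lam
end

section
/- Let R = ℚ[α, β, x₁, …, x_n] and define, for k ≥ 1, g_{(k)} := ∑_{i=1}^k α^{k−i} C(k−1, i−1) h_i(x₁,…,x_n) and g_{(1^k)} := ∑_{i=1}^k β^{k−i} C(k−1, i−1) e_i(x₁,…,x_n). Then in the formal power series ring R[[t]]: (i) 1 + ∑_{k≥1} (t·(1+αt)^{−1})^k · g_{(k)} = ∏_{j=1}^n (1 − x_j t)^{−1}, and (ii) 1 + ∑_{k≥1} (t·(1+βt)^{−1})^k · g_{(1^k)} = ∏_{j=1}^n (1 + x_j t). Here 1+αt, 1+βt and 1−x_jt are invertible in R[[t]] since their constant coefficients equal 1, and the infinite sums make sense coefficientwise because (t·(1+αt)^{−1})^k has t-adic order k. -/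
/-- The complete homogeneous symmetric polynomial `h_m(y₁,…,yₙ)`. -/
noncomputable def hps {K : Type*} [Field K] (n m : ℕ) (y : Fin n → K) : K :=
  ∑ c ∈ Finset.Nat.antidiagonalTuple n m, ∏ i, y i ^ c i

/-- The elementary symmetric polynomial `e_m(y₁,…,yₙ)` (zero for `m > n`). -/
noncomputable def eps {K : Type*} [Field K] (n m : ℕ) (y : Fin n → K) : K :=
  ∑ S ∈ Finset.powersetCard m (Finset.univ : Finset (Fin n)), ∏ i ∈ S, y i

/-- The dual canonical stable Grothendieck polynomial for a one-row shape:
`g_{(k)} = ∑_{i=1}^k α^{k-i} C(k-1, i-1) h_i`. -/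
noncomputable def grow {K : Type*} [Field K] (n : ℕ) (α : K) (x : Fin n → K) (k : ℕ) : K :=
  ∑ i ∈ Finset.Icc 1 k, α ^ (k - i) * ((k - 1).choose (i - 1) : K) * hps n i x

/-- The dual canonical stable Grothendieck polynomial for a one-column shape:
`g_{(1^k)} = ∑_{i=1}^k β^{k-i} C(k-1, i-1) e_i`. -/
noncomputable def gcol {K : Type*} [Field K] (n : ℕ) (β : K) (x : Fin n → K) (k : ℕ) : K :=
  ∑ i ∈ Finset.Icc 1 k, β ^ (k - i) * ((k - 1).choose (i - 1) : K) * eps n i x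

/-!
Put `u = t/(1+αt)`. The coefficient of `t^m` in `u^k` is `C(m-1, k-1) (-α)^(m-k)`, while
`g_(k)` is obtained from the `h_i` by the Pascal-type matrix `(α^(k-i) C(k-1, i-1))`.
Since these Pascal matrices satisfy `P_a P_b = P_(a+b)`, the two matrices are mutually inverse,
so the coefficient of `t^m` on the left is `h_m`, which is that of `∏ⱼ (1 - xⱼt)⁻¹`.
The same argument with `e_m` and `∏ⱼ (1 + xⱼt)` gives (ii).
-/

open PowerSeries Finset

theorem Finset.sum_Icc_one_eq_sum_range {M : Type*} [AddCommMonoid M] (f : ℕ → M) (n : ℕ) :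
    ∑ k ∈ Icc 1 n, f k = ∑ j ∈ range n, f (j + 1) := by
  rw [range_eq_Ico, sum_Ico_add' f 0 n 1, ← Ico_add_one_right_eq_Icc]

section PascalMatrix

variable {R : Type*} [CommRing R]

theorem sum_Icc_choose_mul_choose_mul_pow_mul_pow (a b : R) {i m : ℕ} (him : i ≤ m) :
    ∑ k ∈ Icc i m, (m.choose k * k.choose i : R) * a ^ (m - k) * b ^ (k - i) =
      m.choose i * (a + b) ^ (m - i) := by
  rw [← Ico_add_one_right_eq_Icc, sum_Ico_eq_sum_range, add_comm a, add_pow, mul_sum,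
    Nat.sub_add_comm him]
  refine sum_congr rfl fun j hj => ?_
  have hj : j ≤ m - i := Nat.lt_succ_iff.mp (mem_range.mp hj)
  have hchoose : m.choose (i + j) * (i + j).choose i = m.choose i * (m - i).choose j := by
    rw [Nat.choose_mul (Nat.le_add_right i j), Nat.add_sub_cancel_left]
  rw [← Nat.cast_mul, hchoose, Nat.add_sub_cancel_left, show m - (i + j) = m - i - j by omega]
  push_cast
  ring

theorem sum_range_choose_mul_neg_pow_mul_sum_range_choose (a : R) (c : ℕ → R) (m : ℕ) :
    ∑ k ∈ range (m + 1), (m.choose k : R) * (-a) ^ (m - k) *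
      ∑ i ∈ range (k + 1), (k.choose i : R) * a ^ (k - i) * c i = c m := by
  simp_rw [mul_sum, range_eq_Ico]
  rw [← sum_Ico_Ico_comm]
  have hinner : ∀ i ∈ Ico 0 (m + 1), ∑ k ∈ Ico i (m + 1),
      (m.choose k : R) * (-a) ^ (m - k) * ((k.choose i : R) * a ^ (k - i) * c i) =
        (m.choose i : R) * 0 ^ (m - i) * c i := by
    intro i hi
    have him : i ≤ m := Nat.lt_succ_iff.mp (mem_Ico.mp hi).2
    rw [← neg_add_cancel a, ← sum_Icc_choose_mul_choose_mul_pow_mul_pow _ _ him,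
      Ico_add_one_right_eq_Icc, sum_mul]
    refine sum_congr rfl fun k _ => ?_
    ring
  rw [sum_congr rfl hinner, sum_eq_single m]
  · simp
  · intro i hi him
    have hlt : i < m := by have := (mem_Ico.mp hi).2; omega
    simp [zero_pow (Nat.sub_ne_zero_of_lt hlt)]
  · simp

end PascalMatrix

section GeneratingFunctions

variable {K : Type*} [Field K]

theorem PowerSeries.inv_one_sub_C_mul_X (a : K) :
    (1 - C a * X : K⟦X⟧)⁻¹ = rescale a (mk 1) := by
  rw [PowerSeries.inv_eq_iff_mul_eq_one (by simp), ← rescale_X, ← map_one (rescale a),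
    ← map_sub, ← map_mul, mk_one_mul_one_sub_eq_one, map_one]

theorem PowerSeries.coeff_succ_X_mul_inv_one_add_C_mul_X_pow_succ (a : K) {j m : ℕ}
    (hjm : j ≤ m) :
    coeff (m + 1) ((X * (1 + C a * X)⁻¹) ^ (j + 1)) = m.choose j * (-a) ^ (m - j) := by
  have hinv : (1 + C a * X : K⟦X⟧)⁻¹ = rescale (-a) (mk 1) := by
    rw [← inv_one_sub_C_mul_X, map_neg, neg_mul, sub_neg_eq_add]
  rw [hinv, mul_pow, ← map_pow, mk_one_pow_eq_mk_choose_add,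
    show m + 1 = m - j + (j + 1) by omega, coeff_X_pow_mul, coeff_rescale, coeff_mk,
    Nat.add_sub_cancel' hjm, mul_comm]

theorem PowerSeries.coeff_one_add_sum_X_mul_inv_one_add_C_mul_X_pow (a : K) (c : ℕ → K)
    (hc : c 0 = 1) (m : ℕ) :
    coeff m (1 + ∑ k ∈ Icc 1 m, (X * (1 + C a * X)⁻¹) ^ k *
      C (∑ i ∈ Icc 1 k, a ^ (k - i) * ((k - 1).choose (i - 1) : K) * c i)) = c m := by
  cases m with
  | zero => simp [hc]
  | succ m =>
    rw [map_add, coeff_one, if_neg m.succ_ne_zero, zero_add, map_sum, sum_Icc_one_eq_sum_range]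
    rw [← sum_range_choose_mul_neg_pow_mul_sum_range_choose a (fun i => c (i + 1)) m]
    refine sum_congr rfl fun j hj => ?_
    rw [coeff_mul_C, coeff_succ_X_mul_inv_one_add_C_mul_X_pow_succ a
      (Nat.lt_succ_iff.mp (mem_range.mp hj)), sum_Icc_one_eq_sum_range]
    simp only [Nat.add_sub_add_right, Nat.add_sub_cancel]
    congr 1
    exact sum_congr rfl fun i _ => by ring

theorem hps_zero (n : ℕ) (y : Fin n → K) : hps n 0 y = 1 := by
  simp [hps, Finset.Nat.antidiagonalTuple_zero_right]

theorem eps_zero (n : ℕ) (y : Fin n → K) : eps n 0 y = 1 := by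
  simp [eps]

theorem PowerSeries.coeff_prod_inv_one_sub_C_mul_X (n m : ℕ) (y : Fin n → K) :
    coeff m (∏ j, (1 - C (y j) * X)⁻¹) = hps n m y := by
  classical
  simp_rw [inv_one_sub_C_mul_X, rescale_mk, Pi.one_apply, mul_one]
  rw [coeff_prod, hps]
  refine sum_nbij' (⇑) Finsupp.equivFunOnFinite.symm ?_ ?_ (fun _ _ => by simp) (fun _ _ => rfl) ?_
  · intro l hl
    simpa [Finset.Nat.mem_antidiagonalTuple] using (mem_finsuppAntidiag.mp hl).1
  · intro c hc
    simpa [mem_finsuppAntidiag] using Finset.Nat.mem_antidiagonalTuple.mp hc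
  · simp

end GeneratingFunctions

theorem PowerSeries.coeff_prod_one_add_C_mul_X {R ι : Type*} [CommSemiring R] (s : Finset ι)
    (y : ι → R) (m : ℕ) :
    coeff m (∏ j ∈ s, (1 + C (y j) * X)) = ∑ S ∈ powersetCard m s, ∏ i ∈ S, y i := by
  classical
  simp_rw [add_comm (1 : R⟦X⟧), prod_add, prod_const_one, mul_one, prod_mul_distrib, prod_const,
    ← map_prod, map_sum, coeff_C_mul_X_pow, powersetCard_eq_filter, sum_filter, eq_comm]

/-- in `R[[t]]`,
(i) `1 + ∑_{k≥1} (t(1+αt)⁻¹)^k g_{(k)} = ∏_{j=1}^n (1-xⱼt)⁻¹` and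
(ii) `1 + ∑_{k≥1} (t(1+βt)⁻¹)^k g_{(1^k)} = ∏_{j=1}^n (1+xⱼt)`.
The infinite sums make sense coefficientwise, the `k`-th term having `t`-adic order `≥ k`;
accordingly the identities are stated coefficientwise, the coefficient of `t^m` of the
infinite sum being that of the partial sum over `1 ≤ k ≤ m`. -/
theorem stmt11 {K : Type*} [Field K] (n : ℕ) (α β : K) (x : Fin n → K) :
    (∀ m : ℕ,
        PowerSeries.coeff m
          ((1 : PowerSeries K) + ∑ k ∈ Finset.Icc 1 m,
            (PowerSeries.X * ((1 : PowerSeries K) + PowerSeries.C α * PowerSeries.X)⁻¹) ^ k *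
              PowerSeries.C (grow n α x k)) =
        PowerSeries.coeff m
          (∏ j : Fin n, ((1 : PowerSeries K) - PowerSeries.C (x j) * PowerSeries.X)⁻¹)) ∧
    (∀ m : ℕ,
        PowerSeries.coeff m
          ((1 : PowerSeries K) + ∑ k ∈ Finset.Icc 1 m,
            (PowerSeries.X * ((1 : PowerSeries K) + PowerSeries.C β * PowerSeries.X)⁻¹) ^ k *
              PowerSeries.C (gcol n β x k)) =
        PowerSeries.coeff m
          (∏ j : Fin n, ((1 : PowerSeries K) + PowerSeries.C (x j) * PowerSeries.X))) := by
  refine ⟨fun m => ?_, fun m => ?_⟩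
  · rw [coeff_prod_inv_one_sub_C_mul_X]
    exact coeff_one_add_sum_X_mul_inv_one_add_C_mul_X_pow α (hps n · x) (hps_zero n x) m
  · rw [coeff_prod_one_add_C_mul_X]
    exact coeff_one_add_sum_X_mul_inv_one_add_C_mul_X_pow β (eps n · x) (eps_zero n x) m
end

section
/- Jacobi–Trudi identity (h-version): let λ be a partition with 1 ≤ ℓ(λ) ≤ n (with λ_i := 0 for i > ℓ(λ)). Then in K: G^{(α,β)}_λ(x₁,…,x_n) = det[ h̃^{(i)}_{λ_i−i+j} ]_{1≤i,j≤n}, where for an integer p, h̃^{(i)}_p := ∑_{k=0}^{i−1} (α+β)^k C(i−1, k) · h_{p+k}(x₁/(1−αx₁), …, x_n/(1−αx_n)), h_m is the complete homogeneous symmetric polynomial in n arguments (h_0 = 1, h_m := 0 for m < 0), evaluated at the rational functions x_i/(1−αx_i) ∈ K, and C(·,·) denotes binomial coefficients. -/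
/-- `h` with an integer index: `h_p = 0` for `p < 0`. -/
noncomputable def hInt {K : Type*} [Field K] (n : ℕ) (y : Fin n → K) (p : ℤ) : K :=
  if p < 0 then 0 else hps n p.toNat y


/-!
Put `zᵢ = xᵢ / (1 - αxᵢ)` and `γ = α + β`. Row `i` of the bialternant numerator is
`(1 - αxᵢ)^{n-1}` times the corresponding row for the parameters `(0, γ)` at `z`, and likewise
`xᵢ - xⱼ = (1 - αxᵢ)(1 - αxⱼ)(zᵢ - zⱼ)`, so `G^{(α,β)}_λ(x) = G^{(0,γ)}_λ(z)`.

For `α = 0`, let `Q_j(t) = ∏_{i ≠ j} (1 - zᵢt)`. Since `Q_j(t) ∑_m h_m(z) tᵐ = 1 / (1 - z_j t)`,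
multiplying the Jacobi–Trudi matrix on the right by the matrix of coefficients of the `Q_j`
gives, via the binomial theorem, the transposed bialternant numerator. At `λ = 0, γ = 0` the
Jacobi–Trudi matrix is unitriangular, which identifies the determinant of the coefficient
matrix with the Vandermonde product.
-/

open Finset Matrix

theorem PowerSeries.one_sub_C_mul_X_mul_mk_pow {R : Type*} [CommRing R] (c : R) :
    (1 - C c * X) * mk (c ^ ·) = 1 := by
  have h := congrArg (rescale c) (mk_one_mul_one_sub_eq_one R)
  simpa only [map_mul, map_sub, map_one, rescale_X, rescale_mk, Pi.one_apply, mul_one,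
    mul_comm] using h

section Symmetric

variable {K : Type*} [Field K] {n : ℕ}

theorem hps_eq_coeff_prod_mk_pow (m : ℕ) (y : Fin n → K) :
    hps n m y = PowerSeries.coeff m (∏ i, PowerSeries.mk (y i ^ ·)) := by
  rw [hps, PowerSeries.coeff_prod]
  exact sum_equiv Finsupp.equivFunOnFinite.symm (by simp [Nat.mem_antidiagonalTuple])
    (by simp)

theorem hInt_of_neg (y : Fin n → K) {p : ℤ} (hp : p < 0) : hInt n y p = 0 := if_pos hp

theorem hInt_natCast (y : Fin n → K) (m : ℕ) : hInt n y m = hps n m y := by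
  simp [hInt]

theorem hInt_zero (y : Fin n → K) : hInt n y 0 = 1 := by
  simpa [hps, Nat.antidiagonalTuple_zero_right] using hInt_natCast y 0

end Symmetric

section ProdErase

open Polynomial

variable {R : Type*} [CommRing R] {n : ℕ}

noncomputable def prodErase (z : Fin n → R) (j : Fin n) : R[X] :=
  ∏ i ∈ univ.erase j, (1 - C (z i) * X)

theorem natDegree_prodErase_lt (z : Fin n → R) (j : Fin n) : (prodErase z j).natDegree < n :=
  calc (prodErase z j).natDegree
      ≤ ∑ i ∈ univ.erase j, natDegree (1 - C (z i) * X) :=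
        natDegree_prod_le (univ.erase j) fun i => 1 - C (z i) * X
    _ ≤ ∑ _i ∈ univ.erase j, 1 := sum_le_sum fun _ _ => by compute_degree
    _ < n := by simp [card_erase_of_mem, j.pos]

theorem coe_prodErase_mul_prod_mk_pow (z : Fin n → R) (j : Fin n) :
    (prodErase z j : PowerSeries R) * ∏ i, PowerSeries.mk (z i ^ ·) =
      PowerSeries.mk (z j ^ ·) := by
  have hcoe : (prodErase z j : PowerSeries R) =
      ∏ i ∈ univ.erase j, (1 - PowerSeries.C (z i) * PowerSeries.X) := by
    rw [prodErase, ← coeToPowerSeries.ringHom_apply, map_prod]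
    simp [coeToPowerSeries.ringHom_apply]
  rw [hcoe, ← mul_prod_erase univ _ (mem_univ j), mul_left_comm, ← prod_mul_distrib]
  simp [PowerSeries.one_sub_C_mul_X_mul_mk_pow]

end ProdErase

section JacobiTrudi

variable {K : Type*} [Field K] {n : ℕ}

theorem sum_range_coeff_prodErase_mul_hInt (z : Fin n → K) (j : Fin n) (p : ℕ) :
    ∑ l ∈ range n, (prodErase z j).coeff l * hInt n z ((p : ℤ) - l) = z j ^ p := by
  set f := fun l : ℕ => (prodErase z j).coeff l * hInt n z ((p : ℤ) - l)
  have hpow : z j ^ p = ∑ l ∈ range (p + 1), f l := by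
    rw [← PowerSeries.coeff_mk p (z j ^ ·), ← coe_prodErase_mul_prod_mk_pow,
      PowerSeries.coeff_mul, Nat.sum_antidiagonal_eq_sum_range_succ_mk]
    refine sum_congr rfl fun l hl => ?_
    rw [mem_range] at hl
    rw [Polynomial.coeff_coe, ← hps_eq_coeff_prod_mk_pow, ← hInt_natCast, Nat.cast_sub (by omega)]
  calc ∑ l ∈ range n, f l = ∑ l ∈ range (n + p + 1), f l :=
        sum_subset (range_mono (by omega)) fun l _ hl => by
          simp [f, Polynomial.coeff_eq_zero_of_natDegree_lt
            ((natDegree_prodErase_lt z j).trans_le (by simpa using hl))]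
    _ = ∑ l ∈ range (p + 1), f l :=
        (sum_subset (range_mono (by omega)) fun l _ hl => by
          simp [f, hInt_of_neg z (show (p : ℤ) - l < 0 by simp at hl; omega)]).symm
    _ = z j ^ p := hpow.symm

noncomputable def jtMatrix (n : ℕ) (γ : K) (μ : Fin n → ℕ) (z : Fin n → K) :
    Matrix (Fin n) (Fin n) K :=
  of fun i j => ∑ k ∈ range ((i : ℕ) + 1), γ ^ k * ((i : ℕ).choose k : K) *
    hInt n z ((μ i : ℤ) - ((i : ℕ) : ℤ) + ((j : ℕ) : ℤ) + (k : ℤ))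

noncomputable def prodEraseCoeffMatrix (z : Fin n → K) : Matrix (Fin n) (Fin n) K :=
  of fun k j => (prodErase z j).coeff (n - 1 - k)

def altMatrix (γ : K) (μ : Fin n → ℕ) (z : Fin n → K) : Matrix (Fin n) (Fin n) K :=
  of fun i j => z j ^ (μ i + (n - 1 - i)) * (1 + γ * z j) ^ (i : ℕ)

theorem jtMatrix_mul_prodEraseCoeffMatrix (γ : K) (μ : Fin n → ℕ) (z : Fin n → K) :
    jtMatrix n γ μ z * prodEraseCoeffMatrix z = altMatrix γ μ z := by
  ext i j
  set a := μ i + (n - 1 - i)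
  have hrow (m : ℕ) : ∑ k : Fin n, hInt n z ((μ i : ℤ) - (i : ℕ) + (k : ℕ) + m) *
      (prodErase z j).coeff (n - 1 - k) = z j ^ (a + m) := by
    rw [← sum_range_coeff_prodErase_mul_hInt z j, ← sum_range_reflect,
      Fin.sum_univ_eq_sum_range (fun k => hInt n z ((μ i : ℤ) - (i : ℕ) + k + m) *
        (prodErase z j).coeff (n - 1 - k))]
    refine sum_congr rfl fun l hl => ?_
    rw [mem_range] at hl
    have hi := i.is_lt
    rw [mul_comm]
    congr 2
    push_cast [a, Nat.cast_sub (show (i : ℕ) ≤ n - 1 by omega),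
      Nat.cast_sub (show l ≤ n - 1 by omega)]
    ring
  calc (jtMatrix n γ μ z * prodEraseCoeffMatrix z) i j
      = ∑ m ∈ range ((i : ℕ) + 1), γ ^ m * ((i : ℕ).choose m : K) *
          ∑ k : Fin n, hInt n z ((μ i : ℤ) - (i : ℕ) + (k : ℕ) + m) *
            (prodErase z j).coeff (n - 1 - k) := by
        simp only [mul_apply, jtMatrix, prodEraseCoeffMatrix, of_apply, sum_mul, mul_sum]
        rw [sum_comm]
        simp only [mul_assoc]
    _ = ∑ m ∈ range ((i : ℕ) + 1),
          z j ^ a * ((γ * z j) ^ m * 1 ^ ((i : ℕ) - m) * ((i : ℕ).choose m : K)) := by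
        refine sum_congr rfl fun m _ => ?_
        rw [hrow, pow_add, mul_pow]
        ring
    _ = altMatrix γ μ z i j := by
        rw [← mul_sum, ← add_pow, add_comm]
        rfl

theorem jtMatrix_zero_apply (z : Fin n → K) (i j : Fin n) :
    jtMatrix n 0 0 z i j = hInt n z ((j : ℕ) - (i : ℕ)) := by
  simp [jtMatrix, sum_range_succ', neg_add_eq_sub]

theorem det_jtMatrix_zero (z : Fin n → K) : (jtMatrix n 0 0 z).det = 1 := by
  rw [det_of_isUpperTriangular]
  · simp [jtMatrix_zero_apply, hInt_zero]
  · intro i j hij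
    exact (jtMatrix_zero_apply z i j).trans (hInt_of_neg z (by simpa using hij))

theorem altMatrix_zero (z : Fin n → K) : altMatrix 0 0 z = (projVandermonde 1 z)ᵀ := by
  ext i j
  simp [altMatrix, projVandermonde_apply, Nat.sub_sub, add_comm]

theorem det_prodEraseCoeffMatrix (z : Fin n → K) :
    (prodEraseCoeffMatrix z).det = ∏ i, ∏ j ∈ Ioi i, (z i - z j) := by
  have h := congrArg det (jtMatrix_mul_prodEraseCoeffMatrix 0 0 z)
  simpa [det_mul, det_jtMatrix_zero, altMatrix_zero, det_projVandermonde] using h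

theorem Gb_zero (γ : K) (μ : Fin n → ℕ) (z : Fin n → K) :
    Gb n 0 γ μ z = (altMatrix γ μ z).det / ∏ i, ∏ j ∈ Ioi i, (z i - z j) := by
  rw [Gb, ← det_transpose (altMatrix γ μ z)]
  congr 2
  ext i j
  simp [altMatrix]

theorem det_altMatrix (γ : K) (μ : Fin n → ℕ) (z : Fin n → K) :
    (altMatrix γ μ z).det = (jtMatrix n γ μ z).det * ∏ i, ∏ j ∈ Ioi i, (z i - z j) := by
  rw [← jtMatrix_mul_prodEraseCoeffMatrix, det_mul, det_prodEraseCoeffMatrix]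

theorem prod_Ioi_sub_ne_zero {z : Fin n → K} (hz : Function.Injective z) :
    ∏ i, ∏ j ∈ Ioi i, (z i - z j) ≠ 0 :=
  prod_ne_zero_iff.2 fun _ _ => prod_ne_zero_iff.2 fun _ hj =>
    sub_ne_zero.2 (hz.ne (mem_Ioi.1 hj).ne)

theorem Gb_zero_eq_det_jtMatrix (γ : K) (μ : Fin n → ℕ) {z : Fin n → K}
    (hz : Function.Injective z) : Gb n 0 γ μ z = (jtMatrix n γ μ z).det := by
  rw [Gb_zero, det_altMatrix, mul_div_cancel_right₀ _ (prod_Ioi_sub_ne_zero hz)]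

end JacobiTrudi

section Substitution

variable {K : Type*} [Field K] {n : ℕ}

theorem bialternant_entry_substitution {α β x : K} (hx : 1 - α * x ≠ 0) {l j m : ℕ}
    (hj : j ≤ m) :
    x ^ (l + (m - j)) * (1 + β * x) ^ j * ((1 - α * x) ^ l)⁻¹ =
      (1 - α * x) ^ m *
        ((x / (1 - α * x)) ^ (l + (m - j)) * (1 + (α + β) * (x / (1 - α * x))) ^ j) := by
  have hpow : (1 - α * x) ^ (l + (m - j)) * (1 - α * x) ^ j =
      (1 - α * x) ^ l * (1 - α * x) ^ m := by
    rw [← pow_add, ← pow_add]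
    congr 1
    omega
  have hsum : 1 + (α + β) * (x / (1 - α * x)) = (1 + β * x) / (1 - α * x) := by
    field_simp
    ring
  rw [hsum, div_pow, div_pow, div_mul_div_comm, hpow, mul_div_assoc', mul_comm (_ ^ l),
    mul_div_mul_left _ _ (pow_ne_zero _ hx), div_eq_mul_inv]

theorem injective_div_one_sub_mul {α : K} {x : Fin n → K} (hx : Function.Injective x)
    (hα : ∀ i, 1 - α * x i ≠ 0) : Function.Injective fun i => x i / (1 - α * x i) := by
  intro i j h
  apply hx
  rw [div_eq_div_iff (hα i) (hα j)] at h
  linear_combination h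

theorem prod_Ioi_sub_eq_mul_prod_Ioi_sub_div {α : K} {x : Fin n → K}
    (hα : ∀ i, 1 - α * x i ≠ 0) :
    ∏ i, ∏ j ∈ Ioi i, (x i - x j) = (∏ i, (1 - α * x i) ^ (n - 1)) *
      ∏ i, ∏ j ∈ Ioi i, (x i / (1 - α * x i) - x j / (1 - α * x j)) := by
  have hproj : projVandermonde (fun i => 1 - α * x i) x =
      of fun i j => (1 - α * x i) ^ (n - 1) *
        projVandermonde 1 (fun i => x i / (1 - α * x i)) i j := by
    ext i j
    have hj : (j : ℕ) + j.rev = n - 1 := by rw [Fin.val_rev]; omega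
    simp only [projVandermonde_apply, of_apply, Pi.one_apply, one_pow, one_mul, div_pow, ← hj,
      pow_add]
    field_simp [pow_ne_zero _ (hα i)]
  calc ∏ i, ∏ j ∈ Ioi i, (x i - x j)
      = (projVandermonde (fun i => 1 - α * x i) x).det := by
        rw [det_projVandermonde]
        congr! 2
        ring
    _ = _ := by
        rw [hproj, det_mul_column, det_projVandermonde]
        simp

theorem Gb_eq_Gb_zero (α β : K) (lam : Fin n → ℕ) {x : Fin n → K}
    (hα : ∀ i, 1 - α * x i ≠ 0) :
    Gb n α β lam x = Gb n 0 (α + β) lam (fun i => x i / (1 - α * x i)) := by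
  have hnum : (of fun i j : Fin n => x i ^ (lam j + (n - 1 - j)) * (1 + β * x i) ^ (j : ℕ) *
      ((1 - α * x i) ^ lam j)⁻¹) = of fun i j => (1 - α * x i) ^ (n - 1) *
        (altMatrix (α + β) lam (fun i => x i / (1 - α * x i)))ᵀ i j := by
    ext i j
    exact bialternant_entry_substitution (hα i) (by omega : (j : ℕ) ≤ n - 1)
  rw [Gb, Gb_zero, hnum, det_mul_column, det_transpose, prod_Ioi_sub_eq_mul_prod_Ioi_sub_div hα,
    mul_div_mul_left _ _ (prod_ne_zero_iff.2 fun i _ => pow_ne_zero _ (hα i))]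

end Substitution

theorem stmt13_general {K : Type*} [Field K] (n : ℕ) (α β : K) (x : Fin n → K)
    (hx : Function.Injective x) (hα : ∀ i, 1 - α * x i ≠ 0)
    (lam : Fin n → ℕ) :
    Gb n α β lam x =
      (Matrix.of fun i j : Fin n =>
        ∑ k ∈ Finset.range ((i : ℕ) + 1),
          (α + β) ^ k * ((i : ℕ).choose k : K) *
            hInt n (fun r => x r / (1 - α * x r))
              ((lam i : ℤ) - ((i : ℕ) : ℤ) + ((j : ℕ) : ℤ) + (k : ℤ))).det := by
  rw [Gb_eq_Gb_zero α β lam hα, Gb_zero_eq_det_jtMatrix _ _ (injective_div_one_sub_mul hx hα)]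
  rfl

/-- Jacobi–Trudi, h-version: for a partition `λ` with `1 ≤ ℓ(λ) ≤ n`,
`G^{(α,β)}_λ(x₁,…,xₙ) = det[ h̃^{(i)}_{λᵢ-i+j} ]_{1≤i,j≤n}`, where
`h̃^{(i)}_p = ∑_{k=0}^{i-1} (α+β)^k C(i-1,k) h_{p+k}(x₁/(1-αx₁),…,xₙ/(1-αxₙ))`
and `h_m := 0` for `m < 0`. -/
theorem stmt13 {K : Type*} [Field K] (n : ℕ) (hn : 0 < n) (α β : K) (x : Fin n → K)
    (hx : Function.Injective x) (hα : ∀ i, 1 - α * x i ≠ 0)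
    (lam : Fin n → ℕ) (hlam : Antitone lam) (hpos : 0 < lam ⟨0, hn⟩) :
    Gb n α β lam x =
      (Matrix.of fun i j : Fin n =>
        ∑ k ∈ Finset.range ((i : ℕ) + 1),
          (α + β) ^ k * ((i : ℕ).choose k : K) *
            hInt n (fun r => x r / (1 - α * x r))
              ((lam i : ℤ) - ((i : ℕ) : ℤ) + ((j : ℕ) : ℤ) + (k : ℤ))).det :=
  stmt13_general n α β x hx hα lam
end
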